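/- Let A, B, a, b be positive integers with a ≤ A, b ≤ B, and let G = ℤ_A × ℤ_B. If Λ ⊆ G is a spectrum of the cube Q_{a,b} = [a] × [b], then Q' + Λ is a packing of G, where Q' = [A/gcd(A,a)] × [B/gcd(B,b)]; in particular (A/gcd(A,a)) · (B/gcd(B,b)) · a · b ≤ A · B. -/

import Mathlib

/-! The inner product of the characters `e_l` and `e_m` over the cube `[a] × [b]` factors into
two geometric sums `∑_{j<a} ψ(j • (l₁ - m₁))` and `∑_{k<b} ψ(k • (l₂ - m₂))` of standard
additive characters, and such a sum
vanishes exactly when `δ = l₁ - m₁` is nonzero but `a • δ = 0`. So two distinct points of a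
spectrum differ, in some coordinate, by a nonzero `δ` killed by `a`. No difference `j - j'` with
`j, j' < A / gcd(A, a)` is such a `δ`, since `a j ≡ a j' (mod A)` forces
`j ≡ j' (mod A / gcd(A, a))`. Hence the translates of `Q'` by the spectrum are disjoint, and
counting them gives the inequality. -/

/-- The cube `[a] × [b]` in `ℤ_A × ℤ_B`. -/
def cube2 (A B a b : ℕ) : Finset (ZMod A × ZMod B) :=
  Finset.image (fun v : Fin a × Fin b => (((v.1 : ℕ) : ZMod A), ((v.2 : ℕ) : ZMod B)))
    Finset.univ

/-- The character `e_λ(x) = exp(2πi(λ₁x₁/A + λ₂x₂/B))` on `ℤ_A × ℤ_B`. -/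
noncomputable def e2 (A B : ℕ) (lam x : ZMod A × ZMod B) : ℂ :=
  Complex.exp (2 * (Real.pi : ℂ) * Complex.I *
    ((lam.1.val : ℂ) * (x.1.val : ℂ) / (A : ℂ) + (lam.2.val : ℂ) * (x.2.val : ℂ) / (B : ℂ)))

/-- `Λ` is a spectrum of `E ⊆ ℤ_A × ℤ_B`. -/
def IsSpectrum2 (A B : ℕ) (E L : Finset (ZMod A × ZMod B)) : Prop :=
  L.card = E.card ∧
  ∀ l ∈ L, ∀ m ∈ L, l ≠ m →
    ∑ x ∈ E, e2 A B l x * (starRingEnd ℂ) (e2 A B m x) = 0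

/-- `S + T` is a packing of `G`: each `x` has at most one representation `x = s + t`. -/
def Packs {G : Type*} [AddCommGroup G] (S T : Finset G) : Prop :=
  ∀ x : G, ∀ p q : G × G, (p.1 ∈ S ∧ p.2 ∈ T ∧ x = p.1 + p.2) →
    (q.1 ∈ S ∧ q.2 ∈ T ∧ x = q.1 + q.2) → p = q

open Finset

namespace AddChar

variable {G K : Type*} [AddMonoid G] [Field K] [CharZero K]

theorem sum_range_nsmul_eq_zero_iff {ψ : AddChar G K} (hψ : Function.Injective ψ)
    {n : ℕ} (hn : 0 < n) (x : G) :
    ∑ j ∈ range n, ψ (j • x) = 0 ↔ n • x = 0 ∧ x ≠ 0 := by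
  have eq_one_iff : ∀ y, ψ y = 1 ↔ y = 0 := fun y => by
    rw [← ψ.map_zero_eq_one, hψ.eq_iff]
  simp only [map_nsmul_eq_pow]
  by_cases hx : x = 0
  · simp [hx, hn.ne']
  · have hψx : ψ x ≠ 1 := (eq_one_iff x).not.mpr hx
    rw [geom_sum_eq hψx, div_eq_zero_iff, sub_eq_zero, sub_eq_zero, ← map_nsmul_eq_pow,
      eq_one_iff]
    simp [hx, hψx]

end AddChar

theorem ZMod.injOn_natCast_mul_Iio_div_gcd (A a : ℕ) [NeZero A] :
    Set.InjOn (fun j : ℕ => ((a * j : ℕ) : ZMod A)) (Set.Iio (A / A.gcd a)) := by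
  intro j hj j' hj' h
  have hmod := (ZMod.natCast_eq_natCast_iff _ _ _).mp h
  exact (hmod.cancel_left_div_gcd (Nat.pos_of_neZero A)).eq_of_lt_of_lt hj hj'

theorem ZMod.sub_eq_zero_of_natCast_add_eq_add {A a j j' : ℕ} [NeZero A]
    (hj : j < A / A.gcd a) (hj' : j' < A / A.gcd a) {x y : ZMod A}
    (hxy : a • (x - y) = 0) (h : (j : ZMod A) + x = j' + y) : x - y = 0 := by
  have hsub : x - y = j' - j := by linear_combination h
  have hjj' : j' = j := ZMod.injOn_natCast_mul_Iio_div_gcd A a hj' hj <| by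
    rw [← sub_eq_zero]
    push_cast
    rw [← mul_sub, ← nsmul_eq_mul, ← hsub, hxy]
  rw [hsub, hjj', sub_self]

theorem ZMod.stdAddChar_mul_eq_exp {N : ℕ} [NeZero N] (u v : ZMod N) :
    stdAddChar (u * v) = Complex.exp (2 * Real.pi * Complex.I * (u.val * v.val) / N) := by
  have hmul : u * v = ((u.val * v.val : ℕ) : ZMod N) := by simp
  rw [hmul, stdAddChar_apply, toCircle_natCast]
  push_cast
  rfl

theorem mem_cube2 {A B a b : ℕ} {x : ZMod A × ZMod B} :
    x ∈ cube2 A B a b ↔ ∃ j < a, ∃ k < b, x = ((j : ZMod A), (k : ZMod B)) := by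
  simp [cube2, Fin.exists_iff, eq_comm]

theorem injective_cube2_embedding {A B a b : ℕ} (haA : a ≤ A) (hbB : b ≤ B) :
    Function.Injective
      (fun v : Fin a × Fin b => (((v.1 : ℕ) : ZMod A), ((v.2 : ℕ) : ZMod B))) := by
  have cast_inj : ∀ {n N : ℕ}, n ≤ N →
      Function.Injective (fun i : Fin n => ((i : ℕ) : ZMod N)) := fun hnN i i' h =>
    Fin.ext <| by simpa [ZMod.val_natCast_of_lt (i.2.trans_le hnN),
      ZMod.val_natCast_of_lt (i'.2.trans_le hnN)] using congrArg ZMod.val h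
  exact (cast_inj haA).prodMap (cast_inj hbB)

theorem card_cube2 {A B a b : ℕ} (haA : a ≤ A) (hbB : b ≤ B) : #(cube2 A B a b) = a * b := by
  rw [cube2, card_image_of_injective _ (injective_cube2_embedding haA hbB)]
  simp

section Cube

variable {A B : ℕ} [NeZero A] [NeZero B]

theorem e2_eq_stdAddChar (l x : ZMod A × ZMod B) :
    e2 A B l x = ZMod.stdAddChar (l.1 * x.1) * ZMod.stdAddChar (l.2 * x.2) := by
  rw [ZMod.stdAddChar_mul_eq_exp, ZMod.stdAddChar_mul_eq_exp, e2, ← Complex.exp_add]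
  ring_nf

theorem e2_mul_conj_e2 (l m x : ZMod A × ZMod B) :
    e2 A B l x * starRingEnd ℂ (e2 A B m x) =
      ZMod.stdAddChar ((l.1 - m.1) * x.1) * ZMod.stdAddChar ((l.2 - m.2) * x.2) := by
  rw [e2_eq_stdAddChar, e2_eq_stdAddChar, map_mul (starRingEnd ℂ), ← AddChar.map_neg_eq_conj,
    ← AddChar.map_neg_eq_conj, sub_mul, sub_mul, sub_eq_add_neg, sub_eq_add_neg,
    AddChar.map_add_eq_mul, AddChar.map_add_eq_mul]
  ring

theorem sum_cube2_e2_mul_conj_e2 {a b : ℕ} (haA : a ≤ A) (hbB : b ≤ B)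
    (l m : ZMod A × ZMod B) :
    ∑ x ∈ cube2 A B a b, e2 A B l x * starRingEnd ℂ (e2 A B m x) =
      (∑ j ∈ range a, ZMod.stdAddChar (j • (l.1 - m.1))) *
        ∑ k ∈ range b, ZMod.stdAddChar (k • (l.2 - m.2)) := by
  rw [cube2, sum_image fun v _ w _ h => injective_cube2_embedding haA hbB h,
    Fintype.sum_prod_type, ← Fin.sum_univ_eq_sum_range, ← Fin.sum_univ_eq_sum_range, sum_mul_sum]
  simp only [e2_mul_conj_e2, nsmul_eq_mul, mul_comm]

theorem IsSpectrum2.nsmul_sub_eq_zero_of_ne {a b : ℕ} (ha : 0 < a) (hb : 0 < b)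
    (haA : a ≤ A) (hbB : b ≤ B) {L : Finset (ZMod A × ZMod B)}
    (hL : IsSpectrum2 A B (cube2 A B a b) L) {l m : ZMod A × ZMod B}
    (hl : l ∈ L) (hm : m ∈ L) (hlm : l ≠ m) :
    (a • (l.1 - m.1) = 0 ∧ l.1 - m.1 ≠ 0) ∨ (b • (l.2 - m.2) = 0 ∧ l.2 - m.2 ≠ 0) := by
  have horth := hL.2 l hl m hm hlm
  rwa [sum_cube2_e2_mul_conj_e2 haA hbB, mul_eq_zero,
    AddChar.sum_range_nsmul_eq_zero_iff ZMod.injective_stdAddChar ha,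
    AddChar.sum_range_nsmul_eq_zero_iff ZMod.injective_stdAddChar hb] at horth

end Cube

section Packing

variable {G : Type*} [AddCommGroup G] {S T : Finset G}

theorem packs_of_add_eq_add
    (h : ∀ s ∈ S, ∀ s' ∈ S, ∀ t ∈ T, ∀ t' ∈ T, s + t = s' + t' → t = t') : Packs S T := by
  rintro x ⟨s, t⟩ ⟨s', t'⟩ ⟨hs, ht, rfl⟩ ⟨hs', ht', hx⟩
  obtain rfl : t = t' := h s hs s' hs' t ht t' ht' hx
  exact congrArg (·, t) (add_right_cancel hx)

theorem Packs.card_mul_card_le [Fintype G] (h : Packs S T) : #S * #T ≤ Fintype.card G := by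
  have hinj : Set.InjOn (fun p : G × G => p.1 + p.2) (S ×ˢ T : Finset (G × G)) :=
    fun p hp q hq hpq => h _ p q ⟨(mem_product.mp hp).1, (mem_product.mp hp).2, rfl⟩
      ⟨(mem_product.mp hq).1, (mem_product.mp hq).2, hpq⟩
  rw [← card_product, ← card_univ]
  exact card_le_card_of_injOn _ (fun _ _ => mem_univ _) hinj

end Packing

/-- If `Λ` is a spectrum of `[a]×[b]` then `Q' + Λ` packs `ℤ_A × ℤ_B`,
where `Q' = [A/(A,a)]×[B/(B,b)]`; in particular the packing inequality holds. -/
theorem spectrum_implies_packing (A B a b : ℕ) [NeZero A] [NeZero B]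
    (ha : 0 < a) (hb : 0 < b) (haA : a ≤ A) (hbB : b ≤ B)
    (L : Finset (ZMod A × ZMod B)) (hspec : IsSpectrum2 A B (cube2 A B a b) L) :
    Packs (cube2 A B (A / Nat.gcd A a) (B / Nat.gcd B b)) L ∧
      (A / Nat.gcd A a) * (B / Nat.gcd B b) * a * b ≤ A * B := by
  have hpack : Packs (cube2 A B (A / Nat.gcd A a) (B / Nat.gcd B b)) L := by
    refine packs_of_add_eq_add fun q hq q' hq' l hl m hm hsum => ?_
    by_contra hlm
    obtain ⟨j, hj, k, hk, rfl⟩ := mem_cube2.mp hq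
    obtain ⟨j', hj', k', hk', rfl⟩ := mem_cube2.mp hq'
    rcases hspec.nsmul_sub_eq_zero_of_ne ha hb haA hbB hl hm hlm with ⟨h1, hne⟩ | ⟨h2, hne⟩
    · exact hne (ZMod.sub_eq_zero_of_natCast_add_eq_add hj hj' h1 (congrArg Prod.fst hsum))
    · exact hne (ZMod.sub_eq_zero_of_natCast_add_eq_add hk hk' h2 (congrArg Prod.snd hsum))
  refine ⟨hpack, ?_⟩
  have hcard := hpack.card_mul_card_le
  rw [card_cube2 (Nat.div_le_self A _) (Nat.div_le_self B _), hspec.1, card_cube2 haA hbB,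
    Fintype.card_prod, ZMod.card, ZMod.card] at hcard
  simpa only [mul_assoc] using hcard
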